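/- arXiv:2409.04297 — 2 statements merged into one kernel-verified Lean document; each statement's English description precedes it below -/
import Mathlib

section
/- Let P(λ) = λ²M + λC + K be an n×n complex quadratic matrix polynomial and ε > 0, with weights w_m, w_c, w_k ≥ 0. A complex number λ belongs to the ε-pseudospectrum (i.e., there exist ΔM, ΔC, ΔK ∈ ℂ^{n×n} with ‖[ΔM ΔC ΔK]‖₂ ≤ ε such that det(P(λ) + w_m λ² ΔM + w_c λ ΔC + w_k ΔK) = 0) if and only if σ_min(P(λ)) ≤ ε · p_w(|λ|), where p_w(z) = √(w_m² z⁴ + w_c² z² + w_k²). -/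
open Matrix Complex

/-- Euclidean norm of a complex vector. -/
noncomputable def vnorm {ι : Type*} [Fintype ι] (v : ι → ℂ) : ℝ :=
  Real.sqrt (∑ i, ‖v i‖ ^ 2)

/-- Smallest singular value of a (possibly rectangular) complex matrix:
the infimum of `‖A v‖` over unit vectors `v`. -/
noncomputable def sigmaMin {ι κ : Type*} [Fintype ι] [Fintype κ]
    (A : Matrix ι κ ℂ) : ℝ :=
  sInf {t : ℝ | ∃ v : κ → ℂ, vnorm v = 1 ∧ t = vnorm (A.mulVec v)}

/-- Spectral (operator 2-) norm of a complex matrix. -/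
noncomputable def specNorm {ι κ : Type*} [Fintype ι] [Fintype κ]
    (A : Matrix ι κ ℂ) : ℝ :=
  sSup {t : ℝ | ∃ v : κ → ℂ, vnorm v = 1 ∧ t = vnorm (A.mulVec v)}

/-- The weight/scaling function `p_w(z) = √(w_m² z⁴ + w_c² z² + w_k²)`. -/
noncomputable def pw (wm wc wk z : ℝ) : ℝ :=
  Real.sqrt (wm ^ 2 * z ^ 4 + wc ^ 2 * z ^ 2 + wk ^ 2)

/-- The quadratic matrix polynomial `P(z) = z² M + z C + K`. -/
noncomputable def Ppoly {n : ℕ} (M C K : Matrix (Fin n) (Fin n) ℂ) (z : ℂ) :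
    Matrix (Fin n) (Fin n) ℂ :=
  z ^ 2 • M + z • C + K

/-- The column span (range) of a matrix, viewed as a subspace of `ℂⁿ`. -/
noncomputable def colSpan {n r : ℕ} (A : Matrix (Fin n) (Fin r) ℂ) : Submodule ℂ (Fin n → ℂ) :=
  Submodule.span ℂ (Set.range fun j => fun i => A i j)

/-- The ε-pseudospectrum of the quadratic matrix polynomial `P(λ)=λ²M+λC+K`
(singular value characterization). -/
noncomputable def Lam {n : ℕ} (M C K : Matrix (Fin n) (Fin n) ℂ)
    (ε wm wc wk : ℝ) : Set ℂ :=
  {z : ℂ | sigmaMin (Ppoly M C K z) ≤ ε * pw wm wc wk ‖z‖}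

/-- The restricted ε-pseudospectrum determined by the basis matrix `Vm`. -/
noncomputable def LamRes {n r : ℕ} (M C K : Matrix (Fin n) (Fin n) ℂ)
    (Vm : Matrix (Fin n) (Fin r) ℂ) (ε wm wc wk : ℝ) : Set ℂ :=
  {z : ℂ | sigmaMin (Ppoly M C K z * Vm) ≤ ε * pw wm wc wk ‖z‖}

/-! If `(P(λ) + c₁ΔM + c₂ΔC + c₃ΔK) v = 0` for a unit vector `v`, then
`P(λ) v = -[ΔM ΔC ΔK] x` with `x = (c₁v, c₂v, c₃v)`, and `‖x‖ = ‖c‖ = p_w(|λ|)`; hence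
`σ_min(P(λ)) ≤ ε p_w(|λ|)`. Conversely, if `v` is a minimal right singular vector, the rank-one
block `[ΔM ΔC ΔK] = -(P(λ) v) xᴴ / ‖c‖²` maps `x` to `-P(λ) v`, so it makes `v` a null vector of the
perturbed matrix, and its spectral norm is at most `σ_min(P(λ)) / ‖c‖ ≤ ε`. -/

section VNorm

variable {κ : Type*} [Fintype κ]

theorem vnorm_eq_norm_toLp (v : κ → ℂ) : vnorm v = ‖WithLp.toLp 2 v‖ := by
  simp [vnorm, EuclideanSpace.norm_eq]

theorem vnorm_nonneg (v : κ → ℂ) : 0 ≤ vnorm v := Real.sqrt_nonneg _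

theorem vnorm_eq_zero {v : κ → ℂ} : vnorm v = 0 ↔ v = 0 := by
  simp [vnorm_eq_norm_toLp]

theorem vnorm_smul (c : ℂ) (v : κ → ℂ) : vnorm (c • v) = ‖c‖ * vnorm v := by
  simp only [vnorm_eq_norm_toLp, WithLp.toLp_smul, norm_smul]

theorem vnorm_neg (v : κ → ℂ) : vnorm (-v) = vnorm v := by
  simp [vnorm]

theorem star_dotProduct_eq_inner (x w : κ → ℂ) :
    star x ⬝ᵥ w = inner ℂ (WithLp.toLp 2 x) (WithLp.toLp 2 w) := by
  rw [EuclideanSpace.inner_toLp_toLp, dotProduct_comm]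

theorem star_dotProduct_self_eq_vnorm_sq (v : κ → ℂ) : star v ⬝ᵥ v = ((vnorm v ^ 2 : ℝ) : ℂ) := by
  rw [star_dotProduct_eq_inner, inner_self_eq_norm_sq_to_K, vnorm_eq_norm_toLp]
  push_cast
  rfl

theorem norm_star_dotProduct_le (x w : κ → ℂ) : ‖star x ⬝ᵥ w‖ ≤ vnorm x * vnorm w := by
  rw [star_dotProduct_eq_inner, vnorm_eq_norm_toLp, vnorm_eq_norm_toLp]
  exact norm_inner_le_norm _ _

theorem vnorm_normalize {v : κ → ℂ} (hv : v ≠ 0) : vnorm ((vnorm v : ℂ)⁻¹ • v) = 1 := by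
  rw [vnorm_smul, norm_inv, Complex.norm_real, Real.norm_of_nonneg (vnorm_nonneg v),
    inv_mul_cancel₀ (vnorm_eq_zero.not.mpr hv)]

theorem exists_vnorm_eq_one [Nonempty κ] : ∃ v : κ → ℂ, vnorm v = 1 := by
  classical
  obtain ⟨j⟩ := ‹Nonempty κ›
  exact ⟨Pi.single j 1, by simp [vnorm_eq_norm_toLp]⟩

theorem exists_vnorm_eq_one_mulVec_eq_zero [DecidableEq κ]
    {A : Matrix κ κ ℂ} (h : A.det = 0) : ∃ v, vnorm v = 1 ∧ A *ᵥ v = 0 := by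
  obtain ⟨v, hv, hAv⟩ := exists_mulVec_eq_zero_iff.mpr h
  exact ⟨_, vnorm_normalize hv, by rw [mulVec_smul, hAv, smul_zero]⟩

end VNorm

section UnitSphereImage

variable {ι κ : Type*} [Fintype ι] [Fintype κ]

theorem isCompact_unitSphereImage (A : Matrix ι κ ℂ) :
    IsCompact {t : ℝ | ∃ v : κ → ℂ, vnorm v = 1 ∧ t = vnorm (A *ᵥ v)} := by
  have himage : {t : ℝ | ∃ v : κ → ℂ, vnorm v = 1 ∧ t = vnorm (A *ᵥ v)} =
      (fun x : EuclideanSpace ℂ κ => ‖WithLp.toLp 2 (A *ᵥ x.ofLp)‖) '' Metric.sphere 0 1 := by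
    ext t
    simp only [Set.mem_image, mem_sphere_zero_iff_norm, vnorm_eq_norm_toLp]
    constructor
    · rintro ⟨v, hv, rfl⟩
      exact ⟨WithLp.toLp 2 v, hv, rfl⟩
    · rintro ⟨x, hx, rfl⟩
      exact ⟨x.ofLp, hx, rfl⟩
  rw [himage]
  exact (isCompact_sphere 0 1).image (by fun_prop)

theorem sigmaMin_le_vnorm_mulVec (A : Matrix ι κ ℂ) {v : κ → ℂ} (hv : vnorm v = 1) :
    sigmaMin A ≤ vnorm (A *ᵥ v) :=
  csInf_le ⟨0, by rintro _ ⟨w, -, rfl⟩; exact vnorm_nonneg _⟩ ⟨v, hv, rfl⟩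

theorem exists_vnorm_eq_one_vnorm_mulVec_eq_sigmaMin [Nonempty κ] (A : Matrix ι κ ℂ) :
    ∃ v, vnorm v = 1 ∧ vnorm (A *ᵥ v) = sigmaMin A := by
  obtain ⟨v₀, hv₀⟩ := exists_vnorm_eq_one (κ := κ)
  obtain ⟨v, hv, hmin⟩ := (isCompact_unitSphereImage A).sInf_mem ⟨_, v₀, hv₀, rfl⟩
  exact ⟨v, hv, hmin.symm⟩

theorem specNorm_le {A : Matrix ι κ ℂ} {b : ℝ} (hb : 0 ≤ b)
    (h : ∀ v, vnorm v = 1 → vnorm (A *ᵥ v) ≤ b) : specNorm A ≤ b :=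
  Real.sSup_le (by rintro _ ⟨v, hv, rfl⟩; exact h v hv) hb

theorem vnorm_mulVec_le_specNorm_mul (A : Matrix ι κ ℂ) (v : κ → ℂ) :
    vnorm (A *ᵥ v) ≤ specNorm A * vnorm v := by
  rcases eq_or_ne v 0 with rfl | hv
  · simp [vnorm_eq_norm_toLp]
  have hpos : 0 < vnorm v := (vnorm_nonneg v).lt_of_ne' (vnorm_eq_zero.not.mpr hv)
  have hunit : vnorm (A *ᵥ ((vnorm v : ℂ)⁻¹ • v)) ≤ specNorm A :=
    le_csSup (isCompact_unitSphereImage A).bddAbove ⟨_, vnorm_normalize hv, rfl⟩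
  rw [mulVec_smul, vnorm_smul, norm_inv, Complex.norm_real,
    Real.norm_of_nonneg hpos.le, inv_mul_le_iff₀ hpos] at hunit
  rwa [mul_comm]

theorem specNorm_vecMulVec_star_le (u : ι → ℂ) (x : κ → ℂ) :
    specNorm (vecMulVec u (star x)) ≤ vnorm u * vnorm x := by
  refine specNorm_le (mul_nonneg (vnorm_nonneg u) (vnorm_nonneg x)) fun w hw => ?_
  rw [vecMulVec_mulVec, op_smul_eq_smul, vnorm_smul]
  calc ‖star x ⬝ᵥ w‖ * vnorm u ≤ vnorm x * vnorm w * vnorm u :=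
        mul_le_mul_of_nonneg_right (norm_star_dotProduct_le x w) (vnorm_nonneg u)
    _ = vnorm u * vnorm x := by rw [hw]; ring

end UnitSphereImage

section StructuredPerturbation

variable {ι κ : Type*} [Fintype κ]

def stackSmul (a b c : ℂ) (v : κ → ℂ) : κ ⊕ (κ ⊕ κ) → ℂ :=
  Sum.elim (a • v) (Sum.elim (b • v) (c • v))

theorem vnorm_stackSmul (a b c : ℂ) (v : κ → ℂ) :
    vnorm (stackSmul a b c v) = √(‖a‖ ^ 2 + ‖b‖ ^ 2 + ‖c‖ ^ 2) * vnorm v := by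
  simp only [vnorm, stackSmul, Fintype.sum_sum_type, Sum.elim_inl, Sum.elim_inr, Pi.smul_apply,
    smul_eq_mul, norm_mul, mul_pow, ← Finset.mul_sum]
  rw [← Real.sqrt_mul (by positivity)]
  ring_nf

theorem add_smul_add_smul_add_smul_mulVec (A ΔM ΔC ΔK : Matrix ι κ ℂ) (a b c : ℂ) (v : κ → ℂ) :
    (A + a • ΔM + b • ΔC + c • ΔK) *ᵥ v =
      A *ᵥ v + fromCols ΔM (fromCols ΔC ΔK) *ᵥ stackSmul a b c v := by
  simp only [stackSmul, fromCols_mulVec_sumElim, add_mulVec, smul_mulVec, mulVec_smul, add_assoc]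

variable [Fintype ι] [DecidableEq ι]

theorem sigmaMin_le_of_det_add_smul_eq_zero {A ΔM ΔC ΔK : Matrix ι ι ℂ} {a b c : ℂ} {ε : ℝ}
    (hΔ : specNorm (fromCols ΔM (fromCols ΔC ΔK)) ≤ ε)
    (hdet : (A + a • ΔM + b • ΔC + c • ΔK).det = 0) :
    sigmaMin A ≤ ε * √(‖a‖ ^ 2 + ‖b‖ ^ 2 + ‖c‖ ^ 2) := by
  obtain ⟨v, hv, hQv⟩ := exists_vnorm_eq_one_mulVec_eq_zero hdet
  rw [add_smul_add_smul_add_smul_mulVec] at hQv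
  calc sigmaMin A ≤ vnorm (A *ᵥ v) := sigmaMin_le_vnorm_mulVec A hv
    _ = vnorm (fromCols ΔM (fromCols ΔC ΔK) *ᵥ stackSmul a b c v) := by
        rw [eq_neg_of_add_eq_zero_left hQv, vnorm_neg]
    _ ≤ specNorm (fromCols ΔM (fromCols ΔC ΔK)) * vnorm (stackSmul a b c v) :=
        vnorm_mulVec_le_specNorm_mul _ _
    _ ≤ ε * √(‖a‖ ^ 2 + ‖b‖ ^ 2 + ‖c‖ ^ 2) := by
        rw [vnorm_stackSmul, hv, mul_one]
        exact mul_le_mul_of_nonneg_right hΔ (Real.sqrt_nonneg _)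

theorem exists_det_add_smul_eq_zero_of_sigmaMin_le [Nonempty ι] {A : Matrix ι ι ℂ} {a b c : ℂ}
    {ε : ℝ} (hε : 0 ≤ ε) (h : sigmaMin A ≤ ε * √(‖a‖ ^ 2 + ‖b‖ ^ 2 + ‖c‖ ^ 2)) :
    ∃ ΔM ΔC ΔK : Matrix ι ι ℂ, specNorm (fromCols ΔM (fromCols ΔC ΔK)) ≤ ε ∧
      (A + a • ΔM + b • ΔC + c • ΔK).det = 0 := by
  set p := √(‖a‖ ^ 2 + ‖b‖ ^ 2 + ‖c‖ ^ 2)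
  have hp : 0 ≤ p := Real.sqrt_nonneg _
  obtain ⟨v, hv, hAv⟩ := exists_vnorm_eq_one_vnorm_mulVec_eq_sigmaMin A
  have hx : vnorm (stackSmul a b c v) = p := by rw [vnorm_stackSmul, hv, mul_one]
  set B := vecMulVec (-((p ^ 2 : ℝ) : ℂ)⁻¹ • A *ᵥ v) (star (stackSmul a b c v))
  refine ⟨B.toCols₁, B.toCols₂.toCols₁, B.toCols₂.toCols₂, ?_, ?_⟩
  · rw [fromCols_toCols, fromCols_toCols]
    calc specNorm B ≤ vnorm (-((p ^ 2 : ℝ) : ℂ)⁻¹ • A *ᵥ v) * vnorm (stackSmul a b c v) :=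
          specNorm_vecMulVec_star_le _ _
      _ = sigmaMin A * p / p ^ 2 := by
          rw [vnorm_smul, hAv, hx, norm_neg, norm_inv, Complex.norm_real,
            Real.norm_of_nonneg (by positivity)]
          ring
      _ ≤ ε := div_le_of_le_mul₀ (by positivity) hε <| by
          rw [sq, ← mul_assoc]
          exact mul_le_mul_of_nonneg_right h hp
  · have hv0 : v ≠ 0 := by rintro rfl; simp [vnorm_eq_norm_toLp] at hv
    refine exists_mulVec_eq_zero_iff.mp ⟨v, hv0, ?_⟩
    rw [add_smul_add_smul_add_smul_mulVec, fromCols_toCols, fromCols_toCols, vecMulVec_mulVec,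
      op_smul_eq_smul, star_dotProduct_self_eq_vnorm_sq, hx, smul_smul, mul_neg]
    -- for `p = 0` the junk value `0⁻¹ = 0` makes `B = 0`; then `A v = 0` since `σ_min(A) ≤ 0`
    rcases eq_or_ne p 0 with hp0 | hp0
    · have hσ : sigmaMin A ≤ 0 := by rwa [hp0, mul_zero] at h
      have hAv0 : A *ᵥ v = 0 := vnorm_eq_zero.mp (le_antisymm (hAv ▸ hσ) (vnorm_nonneg _))
      simp [hAv0]
    · rw [mul_inv_cancel₀ (by exact_mod_cast pow_ne_zero 2 hp0), neg_one_smul, add_neg_cancel]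

end StructuredPerturbation

theorem pseudospectrum_characterization_general
    {n : ℕ} (hn : 0 < n) (M C K : Matrix (Fin n) (Fin n) ℂ)
    (ε wm wc wk : ℝ) (hε : 0 < ε)
    (lam : ℂ) :
    (∃ ΔM ΔC ΔK : Matrix (Fin n) (Fin n) ℂ,
        specNorm (Matrix.fromCols ΔM (Matrix.fromCols ΔC ΔK)) ≤ ε ∧
        (Ppoly M C K lam + ((wm : ℂ) * lam ^ 2) • ΔM
            + ((wc : ℂ) * lam) • ΔC + (wk : ℂ) • ΔK).det = 0) ↔
      sigmaMin (Ppoly M C K lam) ≤ ε * pw wm wc wk ‖lam‖ := by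
  have : Nonempty (Fin n) := Fin.pos_iff_nonempty.mp hn
  have hpw : pw wm wc wk ‖lam‖ =
      √(‖(wm : ℂ) * lam ^ 2‖ ^ 2 + ‖(wc : ℂ) * lam‖ ^ 2 + ‖(wk : ℂ)‖ ^ 2) := by
    simp only [pw, norm_mul, norm_pow, Complex.norm_real, Real.norm_eq_abs, mul_pow, sq_abs]
    ring_nf
  rw [hpw]
  exact ⟨fun ⟨_, _, _, hΔ, hdet⟩ => sigmaMin_le_of_det_add_smul_eq_zero hΔ hdet,
    exists_det_add_smul_eq_zero_of_sigmaMin_le hε.le⟩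

/-- `λ` belongs to the ε-pseudospectrum of `P(λ)=λ²M+λC+K` (perturbation
definition, with block perturbation `[ΔM ΔC ΔK]` of spectral norm at most ε) if and only
if `σ_min(P(λ)) ≤ ε p_w(|λ|)`. -/
theorem pseudospectrum_characterization
    {n : ℕ} (hn : 0 < n) (M C K : Matrix (Fin n) (Fin n) ℂ)
    (ε wm wc wk : ℝ) (hε : 0 < ε) (hwm : 0 ≤ wm) (hwc : 0 ≤ wc) (hwk : 0 ≤ wk)
    (lam : ℂ) :
    (∃ ΔM ΔC ΔK : Matrix (Fin n) (Fin n) ℂ,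
        specNorm (Matrix.fromCols ΔM (Matrix.fromCols ΔC ΔK)) ≤ ε ∧
        (Ppoly M C K lam + ((wm : ℂ) * lam ^ 2) • ΔM
            + ((wc : ℂ) * lam) • ΔC + (wk : ℂ) • ΔK).det = 0) ↔
      sigmaMin (Ppoly M C K lam) ≤ ε * pw wm wc wk ‖lam‖ :=
  pseudospectrum_characterization_general hn M C K ε wm wc wk hε lam
end

section
/- Global optimality upon stagnation (Theorem 4.5): in the subspace framework, suppose iterates satisfy ν^(k) ∈ argmin over ν ∈ Ω̄ of α_ε^{V_{k-1}}(P(·;ν)) for each k, the value interpolation α_ε(P(·;ν^(j))) = α_ε^{V_m}(P(·;ν^(j))) holds for all m ≥ j ≥ 1, and the monotonicity α_ε^{V}(P(·;ν)) ≤ α_ε(P(·;ν)) holds for all ν and all subspaces V. If ν^(ℓ) = ν^(k) for some 1 ≤ ℓ < k, then ν^(ℓ) is a global minimizer of ν ↦ α_ε(P(·;ν)) over Ω̄. -/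
/-! The reduced abscissa `α_ε^{V_{k-1}}` is a minorant of `α_ε` (monotonicity) that is exact at
`ν^(ℓ)` (interpolation, as `ℓ ≤ k - 1`), and `ν^(ℓ) = ν^(k)` minimizes it over `Ω̄`; hence
`ν^(ℓ)` minimizes `α_ε` over `Ω̄` as well. -/

open Matrix Complex

/-- Smallest singular value of `A` restricted to a subspace `W`
(equals `σ_min(A·W_mat)` for an orthonormal basis matrix `W_mat` of `W`). -/
noncomputable def sigmaMinOn {n : ℕ} (A : Matrix (Fin n) (Fin n) ℂ)
    (W : Submodule ℂ (Fin n → ℂ)) : ℝ :=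
  sInf {t : ℝ | ∃ v ∈ W, vnorm v = 1 ∧ t = vnorm (A.mulVec v)}

/-- The full ε-pseudospectral abscissa of the parameter-dependent polynomial. -/
noncomputable def alphaFull {n d : ℕ}
    (Mf Cf Kf : (Fin d → ℝ) → Matrix (Fin n) (Fin n) ℂ)
    (ε wm wc wk : ℝ) (ν : Fin d → ℝ) : ℝ :=
  sSup (Complex.re '' {z : ℂ |
    sigmaMin (Ppoly (Mf ν) (Cf ν) (Kf ν) z) ≤ ε * pw wm wc wk ‖z‖})

/-- The restricted ε-pseudospectral abscissa, for a restriction subspace `W`. -/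
noncomputable def alphaRes {n d : ℕ}
    (Mf Cf Kf : (Fin d → ℝ) → Matrix (Fin n) (Fin n) ℂ)
    (ε wm wc wk : ℝ) (W : Submodule ℂ (Fin n → ℂ)) (ν : Fin d → ℝ) : ℝ :=
  sSup (Complex.re '' {z : ℂ |
    sigmaMinOn (Ppoly (Mf ν) (Cf ν) (Kf ν) z) W ≤ ε * pw wm wc wk ‖z‖})

theorem IsMinOn.of_le_of_eq {α β : Type*} [Preorder β] {f g : α → β} {s : Set α} {a : α}
    (hg : IsMinOn g s a) (hgf : g ≤ f) (ha : f a = g a) : IsMinOn f s a :=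
  fun x hx => calc f a = g a := ha
    _ ≤ g x := hg hx
    _ ≤ f x := hgf x

theorem global_optimality_upon_stagnation_general
    {n d : ℕ}
    (Mf Cf Kf : (Fin d → ℝ) → Matrix (Fin n) (Fin n) ℂ)
    (ε wm wc wk : ℝ)
    (Ωbar : Set (Fin d → ℝ))
    (Vs : ℕ → Submodule ℂ (Fin n → ℂ))
    (νit : ℕ → Fin d → ℝ)
    (hargmin : ∀ k, 1 ≤ k → ∀ ν ∈ Ωbar,
      alphaRes Mf Cf Kf ε wm wc wk (Vs (k - 1)) (νit k) ≤
        alphaRes Mf Cf Kf ε wm wc wk (Vs (k - 1)) ν)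
    (hinterp : ∀ j m, 1 ≤ j → j ≤ m →
      alphaFull Mf Cf Kf ε wm wc wk (νit j) =
        alphaRes Mf Cf Kf ε wm wc wk (Vs m) (νit j))
    (hmono : ∀ (W : Submodule ℂ (Fin n → ℂ)) (ν : Fin d → ℝ),
      alphaRes Mf Cf Kf ε wm wc wk W ν ≤ alphaFull Mf Cf Kf ε wm wc wk ν)
    (ℓ k : ℕ) (hℓ : 1 ≤ ℓ) (hℓk : ℓ < k) (hstag : νit ℓ = νit k) :
    ∀ ν ∈ Ωbar, alphaFull Mf Cf Kf ε wm wc wk (νit ℓ) ≤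
      alphaFull Mf Cf Kf ε wm wc wk ν := by
  have hmin : IsMinOn (alphaRes Mf Cf Kf ε wm wc wk (Vs (k - 1))) Ωbar (νit ℓ) :=
    hstag ▸ fun ν hν => hargmin k (by omega) ν hν
  exact hmin.of_le_of_eq (hmono _) (hinterp ℓ (k - 1) hℓ (by omega))

/-- global optimality upon stagnation: in the subspace framework with
iterates `ν^(k)` minimizing the reduced abscissa `α_ε^{V_{k-1}}` over the compact set
`Ω̄`, value interpolation `α_ε(ν^(j)) = α_ε^{V_m}(ν^(j))` for all `m ≥ j ≥ 1`, and
monotonicity `α_ε^{V} ≤ α_ε`, stagnation `ν^(ℓ) = ν^(k)` for some `1 ≤ ℓ < k` implies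
that `ν^(ℓ)` is a global minimizer of `α_ε` over `Ω̄`. -/
theorem global_optimality_upon_stagnation
    {n d : ℕ}
    (Mf Cf Kf : (Fin d → ℝ) → Matrix (Fin n) (Fin n) ℂ)
    (ε wm wc wk : ℝ) (hε : 0 < ε) (hwm : 0 ≤ wm) (hwc : 0 ≤ wc) (hwk : 0 ≤ wk)
    (Ωbar : Set (Fin d → ℝ)) (hΩ : IsCompact Ωbar)
    (Vs : ℕ → Submodule ℂ (Fin n → ℂ)) (hVmono : Monotone Vs)
    (νit : ℕ → Fin d → ℝ)
    (hνin : ∀ k, 1 ≤ k → νit k ∈ Ωbar)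
    (hargmin : ∀ k, 1 ≤ k → ∀ ν ∈ Ωbar,
      alphaRes Mf Cf Kf ε wm wc wk (Vs (k - 1)) (νit k) ≤
        alphaRes Mf Cf Kf ε wm wc wk (Vs (k - 1)) ν)
    (hinterp : ∀ j m, 1 ≤ j → j ≤ m →
      alphaFull Mf Cf Kf ε wm wc wk (νit j) =
        alphaRes Mf Cf Kf ε wm wc wk (Vs m) (νit j))
    (hmono : ∀ (W : Submodule ℂ (Fin n → ℂ)) (ν : Fin d → ℝ),
      alphaRes Mf Cf Kf ε wm wc wk W ν ≤ alphaFull Mf Cf Kf ε wm wc wk ν)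
    (ℓ k : ℕ) (hℓ : 1 ≤ ℓ) (hℓk : ℓ < k) (hstag : νit ℓ = νit k) :
    ∀ ν ∈ Ωbar, alphaFull Mf Cf Kf ε wm wc wk (νit ℓ) ≤
      alphaFull Mf Cf Kf ε wm wc wk ν :=
  global_optimality_upon_stagnation_general Mf Cf Kf ε wm wc wk Ωbar Vs νit hargmin hinterp hmono ℓ
    k hℓ hℓk hstag
end
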